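/- Let d ∈ ℕ, let O ⊆ ℝ^d be an open set, let u_n : O → ℝ (n ∈ ℕ₀) be functions, and let F_n : O × ℝ × ℝ^d × S_d → ℝ (n ∈ ℕ₀) be degenerate elliptic functions such that F₀ is continuous. Assume that sup_{(x,r,p,A) ∈ K} |F_n(x,r,p,A) − F₀(x,r,p,A)| → 0 as n → ∞ for every compact set K ⊆ O × ℝ × ℝ^d × S_d, that sup_{x ∈ K'} |u_n(x) − u₀(x)| → 0 as n → ∞ for every compact set K' ⊆ O, and that for every n ≥ 1 the function u_n is a viscosity solution of F_n = 0. Then u₀ is a viscosity solution of F₀ = 0. -/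

import Mathlib

open Real

/-- The gradient of `φ : ℝ^d → ℝ` at `x`, as the vector of partial derivatives. -/
noncomputable def vecGrad {d : ℕ} (φ : (Fin d → ℝ) → ℝ) (x : Fin d → ℝ) : Fin d → ℝ :=
  fun i => fderiv ℝ φ x (Pi.single i 1)

/-- The Hessian of `φ : ℝ^d → ℝ` at `x`, as the matrix of second partial derivatives. -/
noncomputable def vecHess {d : ℕ} (φ : (Fin d → ℝ) → ℝ) (x : Fin d → ℝ) :
    Matrix (Fin d) (Fin d) ℝ :=
  Matrix.of fun i j => fderiv ℝ (fun y => fderiv ℝ φ y (Pi.single j 1)) x (Pi.single i 1)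

/-- `F : O × ℝ × ℝ^d × S_d → ℝ` is degenerate elliptic if
`F(x,r,p,A) ≤ F(x,r,p,B)` whenever `A ≥ B` (i.e. `A - B` is positive semidefinite). -/
def DegenerateElliptic {d : ℕ} (O : Set (Fin d → ℝ))
    (F : (Fin d → ℝ) → ℝ → (Fin d → ℝ) → Matrix (Fin d) (Fin d) ℝ → ℝ) : Prop :=
  ∀ x ∈ O, ∀ (r : ℝ) (p : Fin d → ℝ) (A B : Matrix (Fin d) (Fin d) ℝ),
    A.IsSymm → B.IsSymm → (A - B).PosSemidef → F x r p A ≤ F x r p B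

/-- `u` is a viscosity subsolution of `F = 0` on the open set `O`: `u` is upper
semicontinuous and `F(x, φ(x), ∇φ(x), Hess φ(x)) ≤ 0` for every `C²` function `φ`
with `φ(x) = u(x)` and `φ ≥ u` on `O`. -/
def IsViscositySubsolution {d : ℕ} (O : Set (Fin d → ℝ))
    (F : (Fin d → ℝ) → ℝ → (Fin d → ℝ) → Matrix (Fin d) (Fin d) ℝ → ℝ)
    (u : (Fin d → ℝ) → ℝ) : Prop :=
  UpperSemicontinuousOn u O ∧
    ∀ φ : (Fin d → ℝ) → ℝ, ContDiffOn ℝ 2 φ O → ∀ x ∈ O, φ x = u x →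
      (∀ y ∈ O, u y ≤ φ y) → F x (φ x) (vecGrad φ x) (vecHess φ x) ≤ 0

/-- `u` is a viscosity supersolution of `F = 0` on the open set `O`: `u` is lower
semicontinuous and `F(x, φ(x), ∇φ(x), Hess φ(x)) ≥ 0` for every `C²` function `φ`
with `φ(x) = u(x)` and `φ ≤ u` on `O`. -/
def IsViscositySupersolution {d : ℕ} (O : Set (Fin d → ℝ))
    (F : (Fin d → ℝ) → ℝ → (Fin d → ℝ) → Matrix (Fin d) (Fin d) ℝ → ℝ)
    (u : (Fin d → ℝ) → ℝ) : Prop :=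
  LowerSemicontinuousOn u O ∧
    ∀ φ : (Fin d → ℝ) → ℝ, ContDiffOn ℝ 2 φ O → ∀ x ∈ O, φ x = u x →
      (∀ y ∈ O, φ y ≤ u y) → 0 ≤ F x (φ x) (vecGrad φ x) (vecHess φ x)

/-- `u` is a viscosity solution of `F = 0` on the open set `O` if it is both a
viscosity subsolution and a viscosity supersolution. -/
def IsViscositySolution {d : ℕ} (O : Set (Fin d → ℝ))
    (F : (Fin d → ℝ) → ℝ → (Fin d → ℝ) → Matrix (Fin d) (Fin d) ℝ → ℝ)
    (u : (Fin d → ℝ) → ℝ) : Prop :=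
  IsViscositySubsolution O F u ∧ IsViscositySupersolution O F u

open Filter
/-!
Stability of viscosity solutions under locally uniform limits. Let `φ` touch `u₀` from above at
`x`. Adding `ε |y - x|²` makes the maximum of `u₀ - ψ`, `ψ = φ + ε |· - x|²`, strict, so the
maximum points `xₙ` of `uₙ - ψ` on a compact neighbourhood of `x` converge to `x`, and
`uₙ xₙ → u₀ x`. Since the definition of a viscosity subsolution asks for test functions that lie
above `uₙ` on all of `O`, `ψ` is modified away from `xₙ` by a smooth function (built with a
partition of unity) that does not change its 2-jet at `xₙ`; this gives
`Fₙ (xₙ, uₙ xₙ, ∇ψ xₙ, D²ψ xₙ) ≤ 0`. Locally uniform convergence of `Fₙ` and continuity of `F₀`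
pass this to the limit `F₀ (x, u₀ x, ∇φ x, D²φ x + 2ε I) ≤ 0`, and `ε → 0` concludes. The
supersolution property follows by applying this to `-uₙ` and `-Fₙ (x, -r, -p, -A)`.
-/

open Set Metric Topology
open scoped Manifold

section Derivatives

variable {d : ℕ} {f g : (Fin d → ℝ) → ℝ} {x : Fin d → ℝ}

theorem vecGrad_congr_of_eventuallyEq (h : f =ᶠ[𝓝 x] g) : vecGrad f x = vecGrad g x := by
  unfold vecGrad
  rw [h.fderiv_eq]

theorem vecHess_congr_of_eventuallyEq (h : f =ᶠ[𝓝 x] g) : vecHess f x = vecHess g x := by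
  ext i j
  have hj : (fun y => fderiv ℝ f y (Pi.single j 1)) =ᶠ[𝓝 x]
      fun y => fderiv ℝ g y (Pi.single j 1) :=
    (h.fderiv (𝕜 := ℝ)).mono fun y hy => by simp only [hy]
  simp only [vecHess, Matrix.of_apply, hj.fderiv_eq]

theorem vecGrad_neg : vecGrad (fun y => -f y) x = -vecGrad f x := by
  ext i
  simp [vecGrad, fderiv_fun_neg]

theorem vecHess_neg : vecHess (fun y => -f y) x = -vecHess f x := by
  ext i j
  simp [vecHess, fderiv_fun_neg]

theorem vecGrad_add (hf : DifferentiableAt ℝ f x) (hg : DifferentiableAt ℝ g x) :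
    vecGrad (fun y => f y + g y) x = vecGrad f x + vecGrad g x := by
  ext i
  simp [vecGrad, fderiv_fun_add hf hg]

theorem differentiableAt_fderiv_apply (hf : ContDiffAt ℝ 2 f x) (v : Fin d → ℝ) :
    DifferentiableAt ℝ (fun y => fderiv ℝ f y v) x :=
  ((hf.fderiv_right (m := 1) (by norm_num)).differentiableAt one_ne_zero).clm_apply
    (differentiableAt_const v)

theorem vecHess_add (hf : ContDiffAt ℝ 2 f x) (hg : ContDiffAt ℝ 2 g x) :
    vecHess (fun y => f y + g y) x = vecHess f x + vecHess g x := by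
  ext i j
  have hj : (fun y => fderiv ℝ (fun w => f w + g w) y (Pi.single j 1)) =ᶠ[𝓝 x]
      fun y => fderiv ℝ f y (Pi.single j 1) + fderiv ℝ g y (Pi.single j 1) := by
    filter_upwards [hf.eventually (by simp), hg.eventually (by simp)] with y hfy hgy
    rw [fderiv_fun_add (hfy.differentiableAt two_ne_zero) (hgy.differentiableAt two_ne_zero)]
    rfl
  simp only [vecHess, Matrix.of_apply, Matrix.add_apply, hj.fderiv_eq,
    fderiv_fun_add (differentiableAt_fderiv_apply hf _) (differentiableAt_fderiv_apply hg _)]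
  rfl

theorem vecGrad_const (c : ℝ) : vecGrad (fun _ => c) x = 0 := by
  ext i
  simp [vecGrad]

theorem vecHess_const (c : ℝ) : vecHess (fun _ => c) x = 0 := by
  ext i j
  simp [vecHess]

theorem vecHess_apply_eq_fderiv_fderiv (hf : ContDiffAt ℝ 2 f x) (i j : Fin d) :
    vecHess f x i j = fderiv ℝ (fderiv ℝ f) x (Pi.single i 1) (Pi.single j 1) := by
  have hd : DifferentiableAt ℝ (fderiv ℝ f) x :=
    (hf.fderiv_right (m := 1) (by norm_num)).differentiableAt one_ne_zero
  simp [vecHess, fderiv_clm_apply hd (differentiableAt_const _)]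

theorem vecHess_isSymm (hf : ContDiffAt ℝ 2 f x) : (vecHess f x).IsSymm := by
  have hsymm := hf.isSymmSndFDerivAt (by simp [minSmoothness_of_isRCLikeNormedField])
  refine Matrix.IsSymm.ext fun i j => ?_
  rw [vecHess_apply_eq_fderiv_fderiv hf, vecHess_apply_eq_fderiv_fderiv hf]
  exact hsymm _ _

theorem continuousAt_vecGrad (hf : ContDiffAt ℝ 1 f x) : ContinuousAt (vecGrad f) x :=
  continuousAt_pi.2 fun i =>
    (ContinuousLinearMap.apply ℝ ℝ (Pi.single i 1)).continuous.continuousAt.comp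
      (hf.continuousAt_fderiv one_ne_zero)

theorem continuousAt_vecHess (hf : ContDiffAt ℝ 2 f x) : ContinuousAt (vecHess f) x := by
  have hcont : ContinuousAt (fderiv ℝ (fderiv ℝ f)) x :=
    (hf.fderiv_right (m := 1) (by norm_num)).continuousAt_fderiv one_ne_zero
  have heq : (fun y => Matrix.of fun i j =>
      fderiv ℝ (fderiv ℝ f) y (Pi.single i 1) (Pi.single j 1)) =ᶠ[𝓝 x] vecHess f := by
    filter_upwards [hf.eventually (by simp)] with y hy
    ext i j
    exact (vecHess_apply_eq_fderiv_fderiv hy i j).symm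
  refine ContinuousAt.congr ?_ heq
  refine continuousAt_pi.2 fun i => continuousAt_pi.2 fun j => ?_
  exact ((ContinuousLinearMap.apply ℝ ℝ (Pi.single j 1)).continuous.comp
    (ContinuousLinearMap.apply ℝ ((Fin d → ℝ) →L[ℝ] ℝ)
      (Pi.single i 1)).continuous).continuousAt.comp hcont

end Derivatives

section SmoothDomination

variable {E : Type*} [NormedAddCommGroup E] [NormedSpace ℝ E] [FiniteDimensional ℝ E]

theorem exists_contDiffOn_ge_of_eventually_nonpos {O : Set E} (hO : IsOpen O) {h : E → ℝ}
    (hh : ContinuousOn h O) {z : E} (hz : ∀ᶠ y in 𝓝 z, h y ≤ 0) (n : ℕ∞) :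
    ∃ g : E → ℝ, ContDiffOn ℝ n g O ∧ g =ᶠ[𝓝 z] 0 ∧ ∀ y ∈ O, h y ≤ g y := by
  classical
  obtain ⟨r, hr, hball⟩ := Metric.eventually_nhds_iff_ball.1 hz
  let O' : TopologicalSpace.Opens E := ⟨O, hO⟩
  have : LocallyCompactSpace O' := hO.locallyCompactSpace
  have : SigmaCompactSpace O' := sigmaCompactSpace_of_locallyCompact_secondCountable
  -- Pointwise convex constraints: `g = 0` on a closed ball around `z`, `g ≥ h` off it.
  let t : O' → Set ℝ := fun y => if (y : E) ∈ closedBall z (r / 2) then {0} else Ici (h y)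
  have ht : ∀ y, Convex ℝ (t y) := fun y => by
    by_cases hy : (y : E) ∈ closedBall z (r / 2)
    · simpa only [t, if_pos hy] using convex_singleton 0
    · simpa only [t, if_neg hy] using convex_Ici _
  have hloc : ∀ y : O', ∃ c : ℝ, ∀ᶠ w in 𝓝 y, c ∈ t w := by
    intro y
    by_cases hy : dist (y : E) z < r
    · refine ⟨0, ?_⟩
      filter_upwards [(isOpen_ball.preimage continuous_subtype_val).mem_nhds hy] with w hw
      by_cases hw' : (w : E) ∈ closedBall z (r / 2)
      · simp only [t, if_pos hw', mem_singleton_iff]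
      · simpa only [t, if_neg hw', mem_Ici] using hball _ hw
    · refine ⟨h y + 1, ?_⟩
      have hfar : (y : E) ∉ closedBall z (r / 2) := by
        rw [mem_closedBall, not_le]; linarith [not_lt.1 hy]
      have hcont : ContinuousAt (fun w : O' => h w) y :=
        (hh.continuousAt (hO.mem_nhds y.2)).comp continuousAt_subtype_val
      filter_upwards [hcont.eventually (gt_mem_nhds (lt_add_one (h y))),
        (isClosed_closedBall.preimage continuous_subtype_val).isOpen_compl.mem_nhds hfar]
        with w hw hw'
      simpa only [t, if_neg (show (w : E) ∉ closedBall z (r / 2) from hw'), mem_Ici] using hw.le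
  obtain ⟨g, hg⟩ := exists_contMDiffMap_forall_mem_convex_of_local_const 𝓘(ℝ, E) (n := n) ht hloc
  refine ⟨fun y => if hy : y ∈ O then g ⟨y, hy⟩ else 0, ?_, ?_, ?_⟩
  · intro y hy
    have hsmooth : ContMDiffAt 𝓘(ℝ, E) 𝓘(ℝ, ℝ) n
        (fun w => if hw : w ∈ O then g ⟨w, hw⟩ else 0) y := by
      rw [← contMDiffAt_subtype_iff (U := O') (x := ⟨y, hy⟩)]
      convert g.contMDiff ⟨y, hy⟩ using 1
      funext w
      simp
    exact (contMDiffAt_iff_contDiffAt.1 hsmooth).contDiffWithinAt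
  · filter_upwards [closedBall_mem_nhds z (half_pos hr)] with y hy
    by_cases hyO : y ∈ O
    · simpa only [t, if_pos hy, mem_singleton_iff, dif_pos hyO, Pi.zero_apply] using hg ⟨y, hyO⟩
    · simp [hyO]
  · intro y hy
    by_cases hy' : y ∈ closedBall z (r / 2)
    · have hgy : g ⟨y, hy⟩ = 0 := by simpa only [t, if_pos hy', mem_singleton_iff] using hg ⟨y, hy⟩
      simpa [hy, hgy] using hball y (closedBall_subset_ball (half_lt_self hr) hy')
    · simpa only [t, if_neg hy', mem_Ici, dif_pos hy] using hg ⟨y, hy⟩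

end SmoothDomination

section StrictMax

variable {X : Type*} [TopologicalSpace X]

def IsUniformlyStrictMaxOn (f : X → ℝ) (s : Set X) (x : X) : Prop :=
  ∀ U ∈ 𝓝 x, ∃ δ > 0, ∀ y ∈ s \ U, f y + δ ≤ f x

theorem IsUniformlyStrictMaxOn.mono {f : X → ℝ} {s t : Set X} {x : X}
    (h : IsUniformlyStrictMaxOn f s x) (hts : t ⊆ s) : IsUniformlyStrictMaxOn f t x :=
  fun U hU => (h U hU).imp fun _ ⟨hδ, hy⟩ => ⟨hδ, fun y hyt => hy y ⟨hts hyt.1, hyt.2⟩⟩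

theorem tendsto_of_isMaxOn_of_tendstoUniformlyOn {ι : Type*} {l : Filter ι}
    {f : ι → X → ℝ} {f₀ : X → ℝ} {K : Set X} {x : X} (hx : x ∈ K)
    (hf : TendstoUniformlyOn f f₀ l K) (hf₀ : IsUniformlyStrictMaxOn f₀ K x) {xs : ι → X}
    (hxs : ∀ᶠ n in l, xs n ∈ K ∧ IsMaxOn (f n) K (xs n)) : Tendsto xs l (𝓝 x) := by
  refine tendsto_def.2 fun U hU => ?_
  obtain ⟨δ, hδ, hgap⟩ := hf₀ U hU
  filter_upwards [hxs, tendstoUniformlyOn_iff.1 hf (δ / 2) (half_pos hδ)]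
    with n ⟨hxsK, hxsmax⟩ hclose
  by_contra hxsU
  have hfar := hgap (xs n) ⟨hxsK, hxsU⟩
  have hxsn := hclose (xs n) hxsK
  have hxn := hclose x hx
  have hmax : f n x ≤ f n (xs n) := hxsmax hx
  rw [Real.dist_eq, abs_lt] at hxsn hxn
  linarith

end StrictMax

section Penalty

variable {d : ℕ}

theorem fderiv_mul_sum_sq_sub_apply_single (ε : ℝ) (x y : Fin d → ℝ) (j : Fin d) :
    fderiv ℝ (fun w => ε * ∑ i, (w i - x i) ^ 2) y (Pi.single j 1) = ε * (2 * (y j - x j)) := by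
  have hsq : ∀ i, HasFDerivAt (fun w : Fin d → ℝ => (w i - x i) ^ 2)
      ((2 * (y i - x i)) • ContinuousLinearMap.proj (R := ℝ) (φ := fun _ : Fin d => ℝ) i) y := by
    intro i
    simpa using ((hasFDerivAt_apply i y).sub_const (x i)).pow 2
  have hsum := (HasFDerivAt.fun_sum fun i (_ : i ∈ Finset.univ) => hsq i).const_mul ε
  rw [hsum.fderiv]
  simp [Pi.single_apply]

theorem contDiff_mul_sum_sq_sub (ε : ℝ) (x : Fin d → ℝ) {n : WithTop ℕ∞} :
    ContDiff ℝ n (fun w : Fin d → ℝ => ε * ∑ i, (w i - x i) ^ 2) := by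
  fun_prop

theorem vecGrad_mul_sum_sq_sub_self (ε : ℝ) (x : Fin d → ℝ) :
    vecGrad (fun w => ε * ∑ i, (w i - x i) ^ 2) x = 0 := by
  ext j
  simp [vecGrad, fderiv_mul_sum_sq_sub_apply_single]

theorem vecHess_mul_sum_sq_sub (ε : ℝ) (x y : Fin d → ℝ) :
    vecHess (fun w => ε * ∑ i, (w i - x i) ^ 2) y = (2 * ε) • (1 : Matrix (Fin d) (Fin d) ℝ) := by
  ext i j
  have hlin : HasFDerivAt (fun w : Fin d → ℝ => ε * (2 * (w j - x j)))
      ((ε * 2) • ContinuousLinearMap.proj (R := ℝ) (φ := fun _ : Fin d => ℝ) j) y := by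
    simpa [mul_assoc, smul_smul] using
      ((((hasFDerivAt_apply (𝕜 := ℝ) (F' := fun _ : Fin d => ℝ) j y).sub_const (x j)).const_mul
        2).const_mul ε)
  simp only [vecHess, Matrix.of_apply, fderiv_mul_sum_sq_sub_apply_single, hlin.fderiv]
  simp [Matrix.one_apply, Pi.single_apply, eq_comm, mul_comm]

theorem dist_sq_le_sum_sq_sub (x y : Fin d → ℝ) : dist y x ^ 2 ≤ ∑ i, (y i - x i) ^ 2 := by
  have hcoord : ∀ i, dist (y i) (x i) ≤ √(∑ i, (y i - x i) ^ 2) := fun i =>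
    Real.le_sqrt_of_sq_le <| by
      rw [Real.dist_eq, sq_abs]
      exact Finset.single_le_sum (f := fun i => (y i - x i) ^ 2) (fun i _ => sq_nonneg _)
        (Finset.mem_univ i)
  have hdist := (dist_pi_le_iff (Real.sqrt_nonneg _)).2 hcoord
  calc dist y x ^ 2 ≤ √(∑ i, (y i - x i) ^ 2) ^ 2 := pow_le_pow_left₀ dist_nonneg hdist 2
    _ = ∑ i, (y i - x i) ^ 2 := Real.sq_sqrt (Finset.sum_nonneg fun i _ => sq_nonneg _)

theorem isUniformlyStrictMaxOn_sub_add_penalty {u φ : (Fin d → ℝ) → ℝ}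
    {O : Set (Fin d → ℝ)} {x : Fin d → ℝ} (hφx : φ x = u x) (hφu : ∀ y ∈ O, u y ≤ φ y)
    {ε : ℝ} (hε : 0 < ε) :
    IsUniformlyStrictMaxOn (fun y => u y - (φ y + ε * ∑ i, (y i - x i) ^ 2)) O x := by
  intro U hU
  obtain ⟨η, hη, hball⟩ := Metric.mem_nhds_iff.1 hU
  refine ⟨ε * η ^ 2, by positivity, fun y ⟨hyO, hyU⟩ => ?_⟩
  have hfar : η ≤ dist y x := not_lt.1 fun h => hyU (hball h)
  have hsq : η ^ 2 ≤ ∑ i, (y i - x i) ^ 2 :=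
    (pow_le_pow_left₀ hη.le hfar 2).trans (dist_sq_le_sum_sq_sub x y)
  have := hφu y hyO
  simp only [sub_self, ne_eq, OfNat.ofNat_ne_zero, not_false_eq_true, zero_pow,
    Finset.sum_const_zero, mul_zero, add_zero, hφx]
  nlinarith

end Penalty

theorem tendstoLocallyUniformlyOn_of_forall_isCompact {ι X : Type*} [TopologicalSpace X]
    [LocallyCompactSpace X] {F : ι → X → ℝ} {f : X → ℝ} {l : Filter ι} {s : Set X}
    (hs : IsLocallyClosed s) (h : ∀ K, IsCompact K → K ⊆ s → TendstoUniformlyOn F f l K) :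
    TendstoLocallyUniformlyOn F f l s := by
  obtain ⟨U, Z, hU, hZ, rfl⟩ := hs
  refine tendstoLocallyUniformlyOn_of_forall_exists_nhds fun x hx => ?_
  obtain ⟨K, hKx, hKU, hK⟩ := local_compact_nhds (hU.mem_nhds hx.1)
  refine ⟨K ∩ Z, inter_mem (mem_nhdsWithin_of_mem_nhds hKx)
    (mem_of_superset self_mem_nhdsWithin inter_subset_right), h _ (hK.inter_right hZ)
    (inter_subset_inter_left _ hKU)⟩

abbrev Operator (d : ℕ) := (Fin d → ℝ) → ℝ → (Fin d → ℝ) → Matrix (Fin d) (Fin d) ℝ → ℝ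

abbrev Jet (d : ℕ) := (Fin d → ℝ) × ℝ × (Fin d → ℝ) × Matrix (Fin d) (Fin d) ℝ

def Operator.uncurry {d : ℕ} (F : Operator d) : Jet d → ℝ :=
  fun q => F q.1 q.2.1 q.2.2.1 q.2.2.2

def jetDomain {d : ℕ} (O : Set (Fin d → ℝ)) : Set (Jet d) :=
  O ×ˢ univ ×ˢ univ ×ˢ {A | A.IsSymm}

def Operator.reflect {d : ℕ} (F : Operator d) : Operator d :=
  fun x r p A => -F x (-r) (-p) (-A)

theorem isLocallyClosed_jetDomain {d : ℕ} {O : Set (Fin d → ℝ)} (hO : IsOpen O) :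
    IsLocallyClosed (jetDomain O) := by
  refine ⟨O ×ˢ univ, univ ×ˢ univ ×ˢ univ ×ˢ {A | A.IsSymm}, hO.prod isOpen_univ,
    isClosed_univ.prod <| isClosed_univ.prod <| isClosed_univ.prod <|
      isClosed_eq continuous_id.matrix_transpose continuous_id, ?_⟩
  ext ⟨x, r, p, A⟩
  simp [jetDomain, Matrix.IsSymm]

section TestFunctions

variable {d : ℕ} {O : Set (Fin d → ℝ)} {F : Operator d} {u : (Fin d → ℝ) → ℝ}

theorem jet_mem_jetDomain {ψ : (Fin d → ℝ) → ℝ} (hO : IsOpen O) (hψ : ContDiffOn ℝ 2 ψ O)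
    {x : Fin d → ℝ} (hx : x ∈ O) (r : ℝ) :
    (x, r, vecGrad ψ x, vecHess ψ x) ∈ jetDomain O :=
  ⟨hx, trivial, trivial, vecHess_isSymm (hψ.contDiffAt (hO.mem_nhds hx))⟩

theorem IsViscositySubsolution.le_zero_of_isLocalMax (hO : IsOpen O)
    (hu : IsViscositySubsolution O F u) (hcont : ContinuousOn u O)
    {ψ : (Fin d → ℝ) → ℝ} (hψ : ContDiffOn ℝ 2 ψ O) {z : Fin d → ℝ} (hz : z ∈ O)
    (hmax : IsLocalMax (fun y => u y - ψ y) z) :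
    F z (u z) (vecGrad ψ z) (vecHess ψ z) ≤ 0 := by
  set c := u z - ψ z
  -- Globalise the local touching by adding a smooth function that vanishes near `z`.
  obtain ⟨g, hg, hgz, hug⟩ := exists_contDiffOn_ge_of_eventually_nonpos hO
    (h := fun y => u y - ψ y - c) ((hcont.sub hψ.continuousOn).sub continuousOn_const)
    (hmax.mono fun y hy => sub_nonpos.2 hy) 2
  have hlocal : (fun y => ψ y + c + g y) =ᶠ[𝓝 z] fun y => ψ y + c :=
    hgz.mono fun y hy => by simp [hy]
  have hψz : ContDiffAt ℝ 2 ψ z := hψ.contDiffAt (hO.mem_nhds hz)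
  have htest := hu.2 (fun y => ψ y + c + g y) ((hψ.add contDiffOn_const).add hg) z hz
    (by simp [hgz.eq_of_nhds, c]) fun y hy => by linarith [show u y - ψ y - c ≤ g y from hug y hy]
  rwa [vecGrad_congr_of_eventuallyEq hlocal, vecHess_congr_of_eventuallyEq hlocal,
    vecGrad_add (hψz.differentiableAt two_ne_zero) (differentiableAt_const c), vecGrad_const,
    add_zero, vecHess_add hψz contDiffAt_const, vecHess_const, add_zero,
    show ψ z + c + g z = u z by simp [hgz.eq_of_nhds, c]] at htest

theorem isViscositySupersolution_iff_reflect :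
    IsViscositySupersolution O F u ↔ IsViscositySubsolution O F.reflect (-u) := by
  refine and_congr upperSemicontinuousOn_neg_iff.symm ⟨fun h φ hφ x hx hφx hφu => ?_,
    fun h φ hφ x hx hφx hφu => ?_⟩
  · have := h (fun y => -φ y) hφ.neg x hx (by simp [hφx]) fun y hy => by
      simpa [neg_le] using hφu y hy
    simpa [Operator.reflect, vecGrad_neg, vecHess_neg] using this
  · have := h (fun y => -φ y) hφ.neg x hx (by simp [hφx]) fun y hy => by
      simpa using hφu y hy
    simpa [Operator.reflect, vecGrad_neg, vecHess_neg] using this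

end TestFunctions

section Limits

variable {ι : Type*} {l : Filter ι} {d : ℕ} {O : Set (Fin d → ℝ)} {F : ι → Operator d}
  {F₀ : Operator d} {u : ι → (Fin d → ℝ) → ℝ} {u₀ : (Fin d → ℝ) → ℝ}

theorem le_zero_of_tendstoLocallyUniformlyOn_of_isUniformlyStrictMaxOn [l.NeBot]
    (hO : IsOpen O)
    (hF : TendstoLocallyUniformlyOn (fun n => (F n).uncurry) F₀.uncurry l (jetDomain O))
    (hF₀ : ContinuousOn F₀.uncurry (jetDomain O)) (hu : TendstoLocallyUniformlyOn u u₀ l O)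
    (hcont : ∀ᶠ n in l, ContinuousOn (u n) O)
    (hsub : ∀ᶠ n in l, IsViscositySubsolution O (F n) (u n))
    {ψ : (Fin d → ℝ) → ℝ} (hψ : ContDiffOn ℝ 2 ψ O) {x : Fin d → ℝ} (hx : x ∈ O)
    (hmax : IsUniformlyStrictMaxOn (fun y => u₀ y - ψ y) O x) :
    F₀ x (u₀ x) (vecGrad ψ x) (vecHess ψ x) ≤ 0 := by
  have hu₀ : ContinuousOn u₀ O := hu.continuousOn hcont.frequently
  have hψx : ContDiffAt ℝ 2 ψ x := hψ.contDiffAt (hO.mem_nhds hx)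
  obtain ⟨K, hKx, hKO, hK⟩ := local_compact_nhds (hO.mem_nhds hx)
  have hmaximizer : ∀ n, ∃ y, ContinuousOn (u n) O →
      y ∈ K ∧ IsMaxOn (fun y => u n y - ψ y) K y := fun n => by
    by_cases hn : ContinuousOn (u n) O
    · obtain ⟨y, hyK, hy⟩ := hK.exists_isMaxOn ⟨x, mem_of_mem_nhds hKx⟩
        ((hn.sub hψ.continuousOn).mono hKO)
      exact ⟨y, fun _ => ⟨hyK, hy⟩⟩
    · exact ⟨x, fun h => absurd h hn⟩
  choose xs hxs using hmaximizer
  replace hxs := hcont.mono hxs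
  have hdiff : TendstoUniformlyOn (fun n y => u n y - ψ y) (fun y => u₀ y - ψ y) l K :=
    ((tendstoLocallyUniformlyOn_iff_forall_isCompact hO).1 hu K hKO hK).sub
      fun _ hU => .of_forall fun _ _ _ => refl_mem_uniformity hU
  have hxs_lim : Tendsto xs l (𝓝 x) := tendsto_of_isMaxOn_of_tendstoUniformlyOn
    (mem_of_mem_nhds hKx) hdiff (hmax.mono hKO) hxs
  have hvalue : Tendsto (fun n => u n (xs n)) l (𝓝 (u₀ x)) := hu.tendsto_comp (hu₀ x hx) hx
    (tendsto_nhdsWithin_iff.2 ⟨hxs_lim, hxs.mono fun n hn => hKO hn.1⟩)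
  have hjet : Tendsto (fun n => (xs n, u n (xs n), vecGrad ψ (xs n), vecHess ψ (xs n))) l
      (𝓝[jetDomain O] (x, u₀ x, vecGrad ψ x, vecHess ψ x)) :=
    tendsto_nhdsWithin_iff.2 ⟨hxs_lim.prodMk_nhds <| hvalue.prodMk_nhds <|
      ((continuousAt_vecGrad (hψx.of_le one_le_two)).tendsto.comp hxs_lim).prodMk_nhds
        ((continuousAt_vecHess hψx).tendsto.comp hxs_lim),
      hxs.mono fun n hn => jet_mem_jetDomain hO hψ (hKO hn.1) _⟩
  -- Eventually `xs n` lies in the interior of `K`, so it is a local maximum of `u n - ψ`.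
  have htouch : ∀ᶠ n in l,
      F n (xs n) (u n (xs n)) (vecGrad ψ (xs n)) (vecHess ψ (xs n)) ≤ 0 := by
    filter_upwards [hxs, hcont, hsub, hxs_lim (interior_mem_nhds.2 hKx)]
      with n ⟨hxsK, hxsmax⟩ hcontn hsubn hint
    exact hsubn.le_zero_of_isLocalMax hO hcontn hψ (hKO hxsK)
      (hxsmax.isLocalMax (mem_interior_iff_mem_nhds.1 hint))
  have hq := jet_mem_jetDomain hO hψ hx (u₀ x)
  exact le_of_tendsto (hF.tendsto_comp (hF₀ _ hq) hq hjet) htouch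

theorem IsViscositySubsolution.of_tendstoLocallyUniformlyOn [l.NeBot] (hO : IsOpen O)
    (hF : TendstoLocallyUniformlyOn (fun n => (F n).uncurry) F₀.uncurry l (jetDomain O))
    (hF₀ : ContinuousOn F₀.uncurry (jetDomain O)) (hu : TendstoLocallyUniformlyOn u u₀ l O)
    (hcont : ∀ᶠ n in l, ContinuousOn (u n) O)
    (hsub : ∀ᶠ n in l, IsViscositySubsolution O (F n) (u n)) :
    IsViscositySubsolution O F₀ u₀ := by
  refine ⟨(hu.continuousOn hcont.frequently).upperSemicontinuousOn,
    fun φ hφ x hx hφx hφu => ?_⟩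
  have hφx' : ContDiffAt ℝ 2 φ x := hφ.contDiffAt (hO.mem_nhds hx)
  -- The quadratic penalty makes the maximum strict, at the cost of `2ε` in the Hessian.
  have hpenalized : ∀ ε : ℝ, 0 < ε →
      F₀ x (φ x) (vecGrad φ x) (vecHess φ x + (2 * ε) • 1) ≤ 0 := by
    intro ε hε
    have hpen : ContDiffAt ℝ 2 (fun y : Fin d → ℝ => ε * ∑ i, (y i - x i) ^ 2) x :=
      (contDiff_mul_sum_sq_sub ε x).contDiffAt
    have := le_zero_of_tendstoLocallyUniformlyOn_of_isUniformlyStrictMaxOn hO hF hF₀ hu hcont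
      hsub (hφ.add (contDiff_mul_sum_sq_sub ε x).contDiffOn) hx
      (isUniformlyStrictMaxOn_sub_add_penalty hφx hφu hε)
    rwa [vecGrad_add (hφx'.differentiableAt two_ne_zero) (hpen.differentiableAt two_ne_zero),
      vecGrad_mul_sum_sq_sub_self, add_zero, vecHess_add hφx' hpen, vecHess_mul_sum_sq_sub,
      ← hφx] at this
  have hjet : Tendsto (fun ε : ℝ => (x, φ x, vecGrad φ x, vecHess φ x + (2 * ε) • 1))
      (𝓝[>] 0) (𝓝[jetDomain O] (x, φ x, vecGrad φ x, vecHess φ x)) := by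
    refine tendsto_nhdsWithin_iff.2 ⟨?_, .of_forall fun ε => ?_⟩
    · refine tendsto_nhdsWithin_of_tendsto_nhds (Continuous.tendsto' ?_ _ _ (by simp))
      fun_prop
    · exact ⟨hx, trivial, trivial, (vecHess_isSymm hφx').add (Matrix.isSymm_one.smul _)⟩
  exact le_of_tendsto ((hF₀ _ (jet_mem_jetDomain hO hφ hx _)).tendsto.comp hjet)
    (eventually_mem_nhdsWithin.mono fun ε hε => hpenalized ε hε)

theorem IsViscositySupersolution.of_tendstoLocallyUniformlyOn [l.NeBot] (hO : IsOpen O)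
    (hF : TendstoLocallyUniformlyOn (fun n => (F n).uncurry) F₀.uncurry l (jetDomain O))
    (hF₀ : ContinuousOn F₀.uncurry (jetDomain O)) (hu : TendstoLocallyUniformlyOn u u₀ l O)
    (hcont : ∀ᶠ n in l, ContinuousOn (u n) O)
    (hsuper : ∀ᶠ n in l, IsViscositySupersolution O (F n) (u n)) :
    IsViscositySupersolution O F₀ u₀ := by
  let σ : Jet d → Jet d := fun q => (q.1, -q.2.1, -q.2.2.1, -q.2.2.2)
  have hσ : Continuous σ := by fun_prop
  have hσO : MapsTo σ (jetDomain O) (jetDomain O) := fun q ⟨hx, _, _, hA⟩ =>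
    ⟨hx, trivial, trivial, hA.neg⟩
  rw [isViscositySupersolution_iff_reflect]
  refine IsViscositySubsolution.of_tendstoLocallyUniformlyOn hO (hF.comp σ hσO hσ.continuousOn).neg
    (hF₀.comp hσ.continuousOn hσO).neg hu.neg (hcont.mono fun n hn => hn.neg)
    (hsuper.mono fun n hn => isViscositySupersolution_iff_reflect.1 hn)

theorem IsViscositySolution.of_tendstoLocallyUniformlyOn [l.NeBot] (hO : IsOpen O)
    (hF : TendstoLocallyUniformlyOn (fun n => (F n).uncurry) F₀.uncurry l (jetDomain O))
    (hF₀ : ContinuousOn F₀.uncurry (jetDomain O)) (hu : TendstoLocallyUniformlyOn u u₀ l O)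
    (hsol : ∀ᶠ n in l, IsViscositySolution O (F n) (u n)) :
    IsViscositySolution O F₀ u₀ := by
  have hcont : ∀ᶠ n in l, ContinuousOn (u n) O := hsol.mono fun n hn =>
    continuousOn_iff_lower_upperSemicontinuousOn.2 ⟨hn.2.1, hn.1.1⟩
  exact ⟨.of_tendstoLocallyUniformlyOn hO hF hF₀ hu hcont (hsol.mono fun _ hn => hn.1),
    .of_tendstoLocallyUniformlyOn hO hF hF₀ hu hcont (hsol.mono fun _ hn => hn.2)⟩

end Limits

theorem viscosity_solution_of_locally_uniform_limits
    {d : ℕ} (O : Set (Fin d → ℝ)) (hO : IsOpen O)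
    (u : ℕ → (Fin d → ℝ) → ℝ)
    (F : ℕ → (Fin d → ℝ) → ℝ → (Fin d → ℝ) → Matrix (Fin d) (Fin d) ℝ → ℝ)
    (hF0cont : ContinuousOn
      (fun q : (Fin d → ℝ) × ℝ × (Fin d → ℝ) × Matrix (Fin d) (Fin d) ℝ =>
        F 0 q.1 q.2.1 q.2.2.1 q.2.2.2)
      (O ×ˢ (Set.univ : Set ℝ) ×ˢ (Set.univ : Set (Fin d → ℝ)) ×ˢ
        {A : Matrix (Fin d) (Fin d) ℝ | A.IsSymm}))
    (hFconv : ∀ K : Set ((Fin d → ℝ) × ℝ × (Fin d → ℝ) × Matrix (Fin d) (Fin d) ℝ),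
      IsCompact K →
      K ⊆ O ×ˢ (Set.univ : Set ℝ) ×ˢ (Set.univ : Set (Fin d → ℝ)) ×ˢ
        {A : Matrix (Fin d) (Fin d) ℝ | A.IsSymm} →
      TendstoUniformlyOn (fun n q => F n q.1 q.2.1 q.2.2.1 q.2.2.2)
        (fun q => F 0 q.1 q.2.1 q.2.2.1 q.2.2.2) atTop K)
    (huconv : ∀ K : Set (Fin d → ℝ), IsCompact K → K ⊆ O →
      TendstoUniformlyOn (fun n x => u n x) (u 0) atTop K)
    (hsol : ∀ n : ℕ, 1 ≤ n → IsViscositySolution O (F n) (u n)) :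
    IsViscositySolution O (F 0) (u 0) := by
  have : LocallyCompactSpace (Matrix (Fin d) (Fin d) ℝ) :=
    inferInstanceAs (LocallyCompactSpace (Fin d → Fin d → ℝ))
  exact IsViscositySolution.of_tendstoLocallyUniformlyOn hO
    (tendstoLocallyUniformlyOn_of_forall_isCompact (isLocallyClosed_jetDomain hO) hFconv)
    hF0cont ((tendstoLocallyUniformlyOn_iff_forall_isCompact hO).2 fun K hKO hK => huconv K hK hKO)
    (eventually_atTop.2 ⟨1, hsol⟩)
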